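/- Let D be the distribution on ℝ⁹ (coordinates t, x₁, y₁, x₂, y₂, x₃, y₃, x₄, y₄) spanned by Z₂ = ∂/∂x₄, Z₃ = ∂/∂y₄, and Z₁ = x₃∂/∂t + x₂x₃∂/∂x₁ + y₂x₃∂/∂y₁ + ∂/∂x₂ + y₃∂/∂y₂ + (b + x₄)∂/∂x₃ + (c + y₄)∂/∂y₃ with (b,c) ≠ (0,0). Then the big growth vector of D at the origin is [3, 5, 7, 9]: i.e. the flag D = D³ ⊂ D² ⊂ D¹ ⊂ D⁰ of consecutive Lie squares (Dʲ⁻¹ = Dʲ + [Dʲ, Dʲ]) has fiber dimensions 3, 5, 7, 9 at 0. -/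

import Mathlib

/-- ℝ⁹ with coordinates t, x₁, y₁, x₂, y₂, x₃, y₃, x₄, y₄ (indices 0,…,8). -/
abbrev E9 := Fin 9 → ℝ

/-- Lie bracket of vector fields on ℝ⁹: `[X,Y](v) = DY(v)(X(v)) - DX(v)(Y(v))`. -/
noncomputable def lieB (X Y : E9 → E9) : E9 → E9 :=
  fun v => fderiv ℝ Y v (X v) - fderiv ℝ X v (Y v)

/-- The EKR (1.2.1) generator
`Z₁ = x₃∂_t + x₂x₃∂_{x₁} + y₂x₃∂_{y₁} + ∂_{x₂} + y₃∂_{y₂} + (b+x₄)∂_{x₃} + (c+y₄)∂_{y₃}`. -/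
noncomputable def Zone (b c : ℝ) : E9 → E9 := fun v =>
  ![v 5, v 3 * v 5, v 4 * v 5, 1, v 6, b + v 7, c + v 8, 0, 0]

/-- The generators of the distribution: Z₁, Z₂ = ∂_{x₄}, Z₃ = ∂_{y₄}. -/
noncomputable def gens (b c : ℝ) : Set (E9 → E9) :=
  {Zone b c, fun _ => Pi.single 7 1, fun _ => Pi.single 8 1}

/-- Generating vector fields of the members of the big flag:
`BigSet b c 0` generates D = D³ and `BigSet b c (k+1)` generates the Lie square
of the distribution generated by `BigSet b c k`. -/
noncomputable def BigSet (b c : ℝ) : ℕ → Set (E9 → E9)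
  | 0 => gens b c
  | k + 1 => BigSet b c k ∪
      {W | ∃ X ∈ BigSet b c k, ∃ Y ∈ BigSet b c k, W = lieB X Y}

/-- The fiber at 0 of the `k`-th member of the big flag. -/
noncomputable def bigFiber (b c : ℝ) (k : ℕ) : Submodule ℝ E9 :=
  Submodule.span ℝ ((fun W : E9 → E9 => W 0) '' BigSet b c k)

/-!
Among the generators only `Z₁` is non-constant, and the bracket of a constant field `a` with a
field `Y` is the directional derivative `DY · a`. Bracketing with `Z₁` therefore produces at the
origin `∂_{x₃}, ∂_{y₃}` (first square), then `∂_t` (from `[∂_{x₃}, Z₁] = ∂_t + x₂∂_{x₁} + y₂∂_{y₁}`)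
and `∂_{y₂}` (second square), and finally `∂_{x₁}, ∂_{y₁}`. For the upper bounds, every field of
the first square is `Z₁` or constant, and `DZ₁(0)` has no `∂_{x₁}, ∂_{y₁}` components.
-/

open Submodule

section CoordSpan

variable {K ι : Type*} [Field K] [Fintype ι]

noncomputable def coordSpan (s : Finset ι) : Submodule K (ι → K) :=
  span K (Pi.basisFun K ι '' s)

lemma single_mem_coordSpan [DecidableEq ι] {s : Finset ι} {i : ι} (hi : i ∈ s) :
    Pi.single i (1 : K) ∈ coordSpan s :=
  subset_span ⟨i, hi, by simp⟩

lemma mem_coordSpan_iff {s : Finset ι} {w : ι → K} : w ∈ coordSpan s ↔ ∀ i ∉ s, w i = 0 := by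
  rw [coordSpan, Module.Basis.mem_span_image]
  simp [Set.subset_def, not_imp_comm]

lemma coordSpan_mono {s t : Finset ι} (h : s ⊆ t) : coordSpan (K := K) s ≤ coordSpan t :=
  span_mono (Set.image_mono (Finset.coe_subset.2 h))

lemma coordSpan_le_iff [DecidableEq ι] {s : Finset ι} {p : Submodule K (ι → K)} :
    coordSpan s ≤ p ↔ ∀ i ∈ s, Pi.single i (1 : K) ∈ p := by
  simp [coordSpan, span_le, Set.subset_def]

lemma finrank_coordSpan (s : Finset ι) : Module.finrank K (coordSpan (K := K) s) = s.card := by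
  rw [coordSpan, Set.image_eq_range]
  exact (finrank_span_eq_card ((Pi.basisFun K ι).linearIndependent.comp _
    Subtype.val_injective)).trans (by simp)

end CoordSpan

section CoordinateDerivatives

variable {𝕜 ι E : Type*} [NontriviallyNormedField 𝕜] [NormedAddCommGroup E] [NormedSpace 𝕜 E]

lemma fderiv_apply_apply {Φ : E → ι → 𝕜} {x : E} (h : DifferentiableAt 𝕜 Φ x) (w : E) (i : ι) :
    fderiv 𝕜 Φ x w i = fderiv 𝕜 (fun y => Φ y i) x w := by
  rw [fderiv_apply h]; rfl

lemma fderiv_eval (i : ι) (x : ι → 𝕜) :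
    fderiv 𝕜 (fun y : ι → 𝕜 => y i) x = ContinuousLinearMap.proj i :=
  (hasFDerivAt_apply i x).fderiv

end CoordinateDerivatives

lemma lieB_const_left (a : E9) (Y : E9 → E9) : lieB (fun _ => a) Y = fun v => fderiv ℝ Y v a := by
  funext v; simp [lieB]

lemma lieB_const_right (X : E9 → E9) (a : E9) :
    lieB X (fun _ => a) = fun v => -fderiv ℝ X v a := by
  funext v; simp [lieB]

lemma lieB_self (X : E9 → E9) : lieB X X = 0 :=
  funext fun _ => sub_self _

lemma lieB_swap (X Y : E9 → E9) : lieB Y X = -lieB X Y := by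
  funext v; simp [lieB]

lemma lieB_const_const (a a' : E9) : lieB (fun _ => a) (fun _ => a') = 0 := by
  funext v; simp [lieB]

lemma fderiv_zone_apply (b c : ℝ) (v w : E9) : fderiv ℝ (Zone b c) v w =
    ![w 5, w 3 * v 5 + v 3 * w 5, w 4 * v 5 + v 4 * w 5, 0, w 6, w 7, w 8, 0, 0] := by
  have hd : DifferentiableAt ℝ (Zone b c) v := by
    refine differentiableAt_pi'' fun i => ?_
    fin_cases i <;> simp [Zone] <;> fun_prop
  funext i
  rw [fderiv_apply_apply hd]
  fin_cases i <;> simp (disch := fun_prop) [Zone, fderiv_fun_mul, fderiv_eval] <;> ring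

lemma zone_zero (b c : ℝ) :
    Zone b c 0 = Pi.single 3 1 + b • Pi.single 5 1 + c • Pi.single 6 1 := by
  funext i; fin_cases i <;> simp [Zone]

noncomputable def Zt : E9 → E9 := fun v => ![1, v 3, v 4, 0, 0, 0, 0, 0, 0]

lemma fderiv_zt_apply (v w : E9) : fderiv ℝ Zt v w = ![0, w 3, w 4, 0, 0, 0, 0, 0, 0] := by
  have hd : DifferentiableAt ℝ Zt v := by
    refine differentiableAt_pi'' fun i => ?_
    fin_cases i <;> simp [Zt] <;> fun_prop
  funext i
  rw [fderiv_apply_apply hd]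
  fin_cases i <;> simp [Zt, fderiv_eval]

lemma zt_zero : Zt 0 = Pi.single 0 1 := by
  funext i; fin_cases i <;> simp [Zt]

lemma bigSet_mono (b c : ℝ) : Monotone (BigSet b c) :=
  monotone_nat_of_le_succ fun _ => Set.subset_union_left

lemma bigFiber_mono (b c : ℝ) : Monotone (bigFiber b c) :=
  fun _ _ h => span_mono (Set.image_mono (bigSet_mono b c h))

section Flag

variable {b c : ℝ}

lemma lieB_single_seven_zone :
    lieB (fun _ => Pi.single 7 1) (Zone b c) = fun _ => Pi.single 5 1 := by
  funext v i; fin_cases i <;> simp [lieB_const_left, fderiv_zone_apply]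

lemma lieB_single_eight_zone :
    lieB (fun _ => Pi.single 8 1) (Zone b c) = fun _ => Pi.single 6 1 := by
  funext v i; fin_cases i <;> simp [lieB_const_left, fderiv_zone_apply]

lemma lieB_single_five_zone : lieB (fun _ => Pi.single 5 1) (Zone b c) = Zt := by
  funext v i; fin_cases i <;> simp [lieB_const_left, fderiv_zone_apply, Zt]

lemma lieB_single_six_zone :
    lieB (fun _ => Pi.single 6 1) (Zone b c) = fun _ => Pi.single 4 1 := by
  funext v i; fin_cases i <;> simp [lieB_const_left, fderiv_zone_apply]

lemma lieB_zone_zt_zero : lieB (Zone b c) Zt 0 = Pi.single 1 1 := by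
  funext i; fin_cases i <;> simp [lieB, fderiv_zone_apply, fderiv_zt_apply, Zone, Zt]

lemma lieB_single_four_zt_zero : lieB (fun _ => Pi.single 4 1) Zt 0 = Pi.single 2 1 := by
  funext i; fin_cases i <;> simp [lieB_const_left, fderiv_zt_apply]

lemma lieB_mem_bigSet_succ {k : ℕ} {X Y : E9 → E9} (hX : X ∈ BigSet b c k)
    (hY : Y ∈ BigSet b c k) : lieB X Y ∈ BigSet b c (k + 1) :=
  Or.inr ⟨X, hX, Y, hY, rfl⟩

lemma apply_zero_mem_bigFiber {k : ℕ} {W : E9 → E9} (h : W ∈ BigSet b c k) :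
    W 0 ∈ bigFiber b c k :=
  subset_span ⟨W, h, rfl⟩

lemma zone_mem_bigSet (k : ℕ) : Zone b c ∈ BigSet b c k :=
  bigSet_mono b c k.zero_le (Set.mem_insert _ _)

lemma single_seven_mem_bigSet (k : ℕ) : (fun _ => Pi.single 7 1 : E9 → E9) ∈ BigSet b c k :=
  bigSet_mono b c k.zero_le (by simp [BigSet, gens])

lemma single_eight_mem_bigSet (k : ℕ) : (fun _ => Pi.single 8 1 : E9 → E9) ∈ BigSet b c k :=
  bigSet_mono b c k.zero_le (by simp [BigSet, gens])

lemma single_five_mem_bigSet_one : (fun _ => Pi.single 5 1 : E9 → E9) ∈ BigSet b c 1 :=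
  lieB_single_seven_zone ▸ lieB_mem_bigSet_succ (single_seven_mem_bigSet 0) (zone_mem_bigSet 0)

lemma single_six_mem_bigSet_one : (fun _ => Pi.single 6 1 : E9 → E9) ∈ BigSet b c 1 :=
  lieB_single_eight_zone ▸ lieB_mem_bigSet_succ (single_eight_mem_bigSet 0) (zone_mem_bigSet 0)

lemma zt_mem_bigSet_two : Zt ∈ BigSet b c 2 :=
  lieB_single_five_zone ▸ lieB_mem_bigSet_succ single_five_mem_bigSet_one (zone_mem_bigSet 1)

lemma single_four_mem_bigSet_two : (fun _ => Pi.single 4 1 : E9 → E9) ∈ BigSet b c 2 :=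
  lieB_single_six_zone ▸ lieB_mem_bigSet_succ single_six_mem_bigSet_one (zone_mem_bigSet 1)

lemma eq_zone_or_const_of_mem_bigSet_one {W : E9 → E9} (hW : W ∈ BigSet b c 1) :
    W = Zone b c ∨ ∃ a ∈ coordSpan {3, 5, 6, 7, 8}, W = fun _ => a := by
  rcases hW with hW | ⟨X, hX, Y, hY, rfl⟩
  · simp only [BigSet, gens, Set.mem_insert_iff, Set.mem_singleton_iff] at hW
    rcases hW with rfl | rfl | rfl
    · exact Or.inl rfl
    · exact Or.inr ⟨Pi.single 7 1, single_mem_coordSpan (by decide), rfl⟩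
    · exact Or.inr ⟨Pi.single 8 1, single_mem_coordSpan (by decide), rfl⟩
  · simp only [BigSet, gens, Set.mem_insert_iff, Set.mem_singleton_iff] at hX hY
    rcases hX with rfl | rfl | rfl <;> rcases hY with rfl | rfl | rfl
    · exact Or.inr ⟨0, zero_mem _, lieB_self _⟩
    · exact Or.inr ⟨-Pi.single 5 1, neg_mem (single_mem_coordSpan (by decide)),
        by rw [lieB_swap, lieB_single_seven_zone]; rfl⟩
    · exact Or.inr ⟨-Pi.single 6 1, neg_mem (single_mem_coordSpan (by decide)),
        by rw [lieB_swap, lieB_single_eight_zone]; rfl⟩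
    · exact Or.inr ⟨_, single_mem_coordSpan (by decide), lieB_single_seven_zone⟩
    · exact Or.inr ⟨0, zero_mem _, lieB_const_const _ _⟩
    · exact Or.inr ⟨0, zero_mem _, lieB_const_const _ _⟩
    · exact Or.inr ⟨_, single_mem_coordSpan (by decide), lieB_single_eight_zone⟩
    · exact Or.inr ⟨0, zero_mem _, lieB_const_const _ _⟩
    · exact Or.inr ⟨0, zero_mem _, lieB_const_const _ _⟩

lemma bigFiber_zero :
    bigFiber b c 0 = span ℝ (Set.range ![Zone b c 0, Pi.single 7 1, Pi.single 8 1]) := by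
  simp only [bigFiber, BigSet, gens, Set.image_insert_eq, Set.image_singleton, Matrix.range_cons,
    Matrix.range_empty, Set.union_empty, Set.singleton_union]

lemma linearIndependent_zone_zero_single :
    LinearIndependent ℝ ![Zone b c 0, Pi.single 7 1, Pi.single 8 1] := by
  refine LinearIndependent.of_comp (LinearMap.funLeft ℝ ℝ ![3, 7, 8]) ?_
  convert Pi.linearIndependent_single_one (Fin 3) ℝ using 1
  funext i j; fin_cases i <;> fin_cases j <;> simp [Zone]

lemma bigFiber_one : bigFiber b c 1 = coordSpan {3, 5, 6, 7, 8} := by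
  refine le_antisymm (span_le.2 ?_) (coordSpan_le_iff.2 ?_)
  · rintro _ ⟨W, hW, rfl⟩
    rcases eq_zone_or_const_of_mem_bigSet_one hW with rfl | ⟨a, ha, rfl⟩
    · show Zone b c 0 ∈ _
      rw [zone_zero]
      exact add_mem (add_mem (single_mem_coordSpan (by decide))
        (smul_mem _ _ (single_mem_coordSpan (by decide))))
        (smul_mem _ _ (single_mem_coordSpan (by decide)))
    · exact ha
  · have h5 := apply_zero_mem_bigFiber (single_five_mem_bigSet_one (b := b) (c := c))
    have h6 := apply_zero_mem_bigFiber (single_six_mem_bigSet_one (b := b) (c := c))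
    simp only [Finset.mem_insert, Finset.mem_singleton, forall_eq_or_imp, forall_eq]
    refine ⟨?_, h5, h6, apply_zero_mem_bigFiber (single_seven_mem_bigSet 1),
      apply_zero_mem_bigFiber (single_eight_mem_bigSet 1)⟩
    have h3 : (Pi.single 3 1 : E9) = Zone b c 0 - b • Pi.single 5 1 - c • Pi.single 6 1 := by
      rw [zone_zero]; abel
    rw [h3]
    exact sub_mem (sub_mem (apply_zero_mem_bigFiber (zone_mem_bigSet 1)) (smul_mem _ _ h5))
      (smul_mem _ _ h6)

lemma fderiv_zone_zero_mem (w : E9) :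
    fderiv ℝ (Zone b c) 0 w ∈ coordSpan {0, 3, 4, 5, 6, 7, 8} := by
  rw [mem_coordSpan_iff]
  intro i hi
  fin_cases i <;> simp_all [fderiv_zone_apply]

lemma bigFiber_two : bigFiber b c 2 = coordSpan {0, 3, 4, 5, 6, 7, 8} := by
  refine le_antisymm (span_le.2 ?_) (coordSpan_le_iff.2 ?_)
  · rintro _ ⟨W, hW | ⟨X, hX, Y, hY, rfl⟩, rfl⟩
    · exact coordSpan_mono (by decide) (bigFiber_one ▸ apply_zero_mem_bigFiber hW)
    rcases eq_zone_or_const_of_mem_bigSet_one hX with rfl | ⟨a, -, rfl⟩ <;>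
      rcases eq_zone_or_const_of_mem_bigSet_one hY with rfl | ⟨a', -, rfl⟩
    · rw [SetLike.mem_coe, lieB_self]; exact zero_mem _
    · rw [SetLike.mem_coe, lieB_const_right]; exact neg_mem (fderiv_zone_zero_mem _)
    · rw [SetLike.mem_coe, lieB_const_left]; exact fderiv_zone_zero_mem _
    · rw [SetLike.mem_coe, lieB_const_const]; exact zero_mem _
  · intro i hi
    by_cases hi' : i ∈ ({3, 5, 6, 7, 8} : Finset (Fin 9))
    · exact bigFiber_mono b c one_le_two (bigFiber_one ▸ single_mem_coordSpan hi')
    · obtain rfl | rfl : i = 0 ∨ i = 4 := by revert i; decide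
      · exact zt_zero ▸ apply_zero_mem_bigFiber zt_mem_bigSet_two
      · exact apply_zero_mem_bigFiber single_four_mem_bigSet_two

lemma bigFiber_three : bigFiber b c 3 = coordSpan Finset.univ := by
  refine le_antisymm (fun w _ => mem_coordSpan_iff.2 fun i hi => absurd (Finset.mem_univ i) hi)
    (coordSpan_le_iff.2 fun i _ => ?_)
  by_cases hi : i ∈ ({0, 3, 4, 5, 6, 7, 8} : Finset (Fin 9))
  · exact bigFiber_mono b c (by norm_num) (bigFiber_two ▸ single_mem_coordSpan hi)
  · obtain rfl | rfl : i = 1 ∨ i = 2 := by revert i; decide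
    · exact lieB_zone_zt_zero ▸ apply_zero_mem_bigFiber
        (lieB_mem_bigSet_succ (zone_mem_bigSet 2) zt_mem_bigSet_two)
    · exact lieB_single_four_zt_zero ▸ apply_zero_mem_bigFiber
        (lieB_mem_bigSet_succ single_four_mem_bigSet_two zt_mem_bigSet_two)

end Flag

theorem big_growth_vector_121_general (b c : ℝ) :
    Module.finrank ℝ (bigFiber b c 0) = 3 ∧
    Module.finrank ℝ (bigFiber b c 1) = 5 ∧
    Module.finrank ℝ (bigFiber b c 2) = 7 ∧
    Module.finrank ℝ (bigFiber b c 3) = 9 := by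
  refine ⟨?_, ?_, ?_, ?_⟩
  · rw [bigFiber_zero, finrank_span_eq_card linearIndependent_zone_zero_single]; simp
  · rw [bigFiber_one, finrank_coordSpan]; rfl
  · rw [bigFiber_two, finrank_coordSpan]; rfl
  · rw [bigFiber_three, finrank_coordSpan]; rfl

/-- For `(b,c) ≠ (0,0)`, the big growth vector at the origin of the
distribution spanned by Z₁, ∂_{x₄}, ∂_{y₄} is [3, 5, 7, 9]. -/
theorem big_growth_vector_121 (b c : ℝ) (hbc : (b, c) ≠ (0, 0)) :
    Module.finrank ℝ (bigFiber b c 0) = 3 ∧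
    Module.finrank ℝ (bigFiber b c 1) = 5 ∧
    Module.finrank ℝ (bigFiber b c 2) = 7 ∧
    Module.finrank ℝ (bigFiber b c 3) = 9 :=
  big_growth_vector_121_general b c
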